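/- Let z and complex points t_{c} for c in a finite list be pairwise distinct, and fix two adjacent candidate positions for two indices x and y. Define ζ_{(c_N,...,c_1)}(z) = ∏_{k=2}^N 1/(c_k − c_{k-1}) · 1/(c_1 − z). View ζ_I(z) as a rational function of s = t_x with all other points fixed. Then: (1) if I = I'' x y I' (x immediately to the left of y), lim_{s→t_y} (s − t_y) ζ_I(z) = ζ_{I'' y I'}(z); (2) if I = I'' y x I' (x immediately to the right of y), lim_{s→t_y} (s − t_y) ζ_I(z) = −ζ_{I'' y I'}(z); (3) if x and y are not adjacent in I (or x does not occur in I), the limit lim_{s→t_y} (s − t_y) ζ_I(z) = 0. -/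

import Mathlib

open Filter

/-- `zeta [c_N,...,c_1] z = (∏_{k=2}^N 1/(c_k - c_{k-1})) · 1/(c_1 - z)`, `zeta [] z = 1`. -/
noncomputable def zeta : List ℂ → ℂ → ℂ
  | [], _ => 1
  | [a], z => (a - z)⁻¹
  | a :: b :: rest, z => (a - b)⁻¹ * zeta (b :: rest) z

open Topology

/-! `ζ_I(z)` has a simple pole along `t_x = t_y` exactly when `x` and `y` are adjacent in `I`,
coming from the single factor `1/(t_x - t_y)` (or `1/(t_y - t_x)`); all other factors are
continuous there. Splitting the word at `x` factors `ζ_{P x Q}(z) = ζ_P(t_x) · ζ_{x Q}(z)`, which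
isolates that factor, and the residue is the value of the remaining continuous part. -/

theorem ContinuousAt.tendsto_sub_mul_nhdsNE {R : Type*} [TopologicalSpace R] [Ring R]
    [IsTopologicalRing R] {f : R → R} {t : R} (hf : ContinuousAt f t) :
    Tendsto (fun s => (s - t) * f s) (𝓝[≠] t) (𝓝 0) := by
  have h : ContinuousAt (fun s => (s - t) * f s) t :=
    (continuousAt_id.sub continuousAt_const).mul hf
  simpa using h.tendsto.mono_left nhdsWithin_le_nhds

theorem ContinuousAt.tendsto_nhdsNE_of_eq {X Y : Type*} [TopologicalSpace X]
    [TopologicalSpace Y] {f g : X → Y} {t : X} (hf : ContinuousAt f t)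
    (hfg : ∀ s, s ≠ t → f s = g s) : Tendsto g (𝓝[≠] t) (𝓝 (f t)) :=
  (hf.tendsto.mono_left nhdsWithin_le_nhds).congr' (eventually_mem_nhdsWithin.mono hfg)

theorem zeta_cons_cons (a b z : ℂ) (L : List ℂ) :
    zeta (a :: b :: L) z = (a - b)⁻¹ * zeta (b :: L) z := rfl

theorem zeta_append_cons (z : ℂ) : ∀ (P : List ℂ) (a : ℂ) (Q : List ℂ),
    zeta (P ++ a :: Q) z = zeta P a * zeta (a :: Q) z
  | [], a, Q => by simp [zeta]
  | [b], a, Q => by simp [zeta]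
  | b :: c :: P, a, Q => by
      rw [List.cons_append, List.cons_append, zeta_cons_cons, ← List.cons_append,
        zeta_append_cons z (c :: P) a Q, zeta_cons_cons, mul_assoc]

theorem continuousAt_zeta {t : ℂ} : ∀ {P : List ℂ}, P.getLast? ≠ some t →
    ContinuousAt (zeta P) t
  | [], _ => by simpa only [zeta] using continuousAt_const
  | [b], h => by
      have hb : b - t ≠ 0 := sub_ne_zero.mpr (by simpa using h)
      show ContinuousAt (fun s => (b - s)⁻¹) t
      exact (continuousAt_const.sub continuousAt_id).inv₀ hb
  | b :: c :: P, h => by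
      rw [List.getLast?_cons_cons] at h
      show ContinuousAt (fun s => (b - c)⁻¹ * zeta (c :: P) s) t
      exact continuousAt_const.mul (continuousAt_zeta h)

theorem continuousAt_zeta_cons {z t : ℂ} {Q : List ℂ} (hz : t ≠ z) (hQ : Q.head? ≠ some t) :
    ContinuousAt (fun s => zeta (s :: Q) z) t := by
  cases Q with
  | nil => exact (continuousAt_id.sub continuousAt_const).inv₀ (sub_ne_zero.mpr hz)
  | cons b Q =>
      have hb : t - b ≠ 0 := sub_ne_zero.mpr fun h => hQ (by simp [h])
      exact ((continuousAt_id.sub continuousAt_const).inv₀ hb).mul continuousAt_const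

section Residues

variable {z t : ℂ} {P Q : List ℂ}

theorem tendsto_sub_mul_zeta_append_cons_cons_left (hP : P.getLast? ≠ some t) :
    Tendsto (fun s => (s - t) * zeta (P ++ s :: t :: Q) z) (𝓝[≠] t)
      (𝓝 (zeta (P ++ t :: Q) z)) := by
  rw [zeta_append_cons]
  refine ContinuousAt.tendsto_nhdsNE_of_eq
    (f := fun s => zeta P s * zeta (t :: Q) z)
    ((continuousAt_zeta hP).mul continuousAt_const) fun s hs => ?_
  have hst : s - t ≠ 0 := sub_ne_zero.mpr hs
  rw [zeta_append_cons, zeta_cons_cons]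
  field_simp

theorem tendsto_sub_mul_zeta_append_cons_cons_right (hz : t ≠ z) (hQ : Q.head? ≠ some t) :
    Tendsto (fun s => (s - t) * zeta (P ++ t :: s :: Q) z) (𝓝[≠] t)
      (𝓝 (-zeta (P ++ t :: Q) z)) := by
  rw [zeta_append_cons]
  refine ContinuousAt.tendsto_nhdsNE_of_eq (f := fun s => -(zeta P t * zeta (s :: Q) z))
    (continuousAt_const.mul (continuousAt_zeta_cons hz hQ)).neg fun s hs => ?_
  have hts : t - s ≠ 0 := sub_ne_zero.mpr (Ne.symm hs)
  rw [zeta_append_cons, zeta_cons_cons, ← neg_sub t s]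
  field_simp

theorem tendsto_sub_mul_zeta_append_cons (hz : t ≠ z) (hP : P.getLast? ≠ some t)
    (hQ : Q.head? ≠ some t) :
    Tendsto (fun s => (s - t) * zeta (P ++ s :: Q) z) (𝓝[≠] t) (𝓝 0) := by
  simp only [zeta_append_cons]
  exact ContinuousAt.tendsto_sub_mul_nhdsNE (f := fun s => zeta P s * zeta (s :: Q) z)
    ((continuousAt_zeta hP).mul (continuousAt_zeta_cons hz hQ))

end Residues

theorem ne_and_not_mem_of_pairwise_ne {z t : ℂ} {L : List ℂ}
    (h : (z :: t :: L).Pairwise (· ≠ ·)) : t ≠ z ∧ t ∉ L := by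
  simp only [List.pairwise_cons, List.mem_cons] at h
  exact ⟨fun e => h.1 t (Or.inl rfl) e.symm, fun m => h.2.1 t m rfl⟩

/-- Action of the diagonal residue operator `res_{(t_x → t_y)}` on `ζ_I`, where
`s = t_x` is the residue variable and `t_y = ty` the target (lists read with
head = leftmost):
(1) if `x` is immediately to the left of `y` (`I = I'' x y I'`),
    `lim_{s→ty} (s−ty) ζ_I(z) = ζ_{I'' y I'}(z)`;
(2) if `x` is immediately to the right of `y` (`I = I'' y x I'`), the limit is
    `−ζ_{I'' y I'}(z)`;
(3) if `x` occurs but is not adjacent to `y`, or (4) `x` does not occur, the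
    limit is `0`. -/
theorem diagonal_residue (z ty : ℂ) :
    (∀ P Q : List ℂ, (z :: ty :: (P ++ Q)).Pairwise (· ≠ ·) →
        Tendsto (fun s : ℂ => (s - ty) * zeta (P ++ s :: ty :: Q) z)
          (nhdsWithin ty {ty}ᶜ) (nhds (zeta (P ++ ty :: Q) z))) ∧
      (∀ P Q : List ℂ, (z :: ty :: (P ++ Q)).Pairwise (· ≠ ·) →
        Tendsto (fun s : ℂ => (s - ty) * zeta (P ++ ty :: s :: Q) z)
          (nhdsWithin ty {ty}ᶜ) (nhds (-zeta (P ++ ty :: Q) z))) ∧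
      (∀ P Q : List ℂ, (z :: (P ++ Q)).Pairwise (· ≠ ·) → ty ≠ z →
        P.getLast? ≠ some ty → Q.head? ≠ some ty →
        Tendsto (fun s : ℂ => (s - ty) * zeta (P ++ s :: Q) z)
          (nhdsWithin ty {ty}ᶜ) (nhds 0)) ∧
      (∀ L : List ℂ, (z :: L).Pairwise (· ≠ ·) →
        Tendsto (fun s : ℂ => (s - ty) * zeta L z)
          (nhdsWithin ty {ty}ᶜ) (nhds 0)) := by
  refine ⟨fun P Q h => ?_, fun P Q h => ?_, fun P Q _ hz hP hQ => ?_, fun L _ => ?_⟩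
  · obtain ⟨-, hP⟩ := ne_and_not_mem_of_pairwise_ne h
    exact tendsto_sub_mul_zeta_append_cons_cons_left fun e =>
      hP (List.mem_append_left Q (List.mem_of_getLast? e))
  · obtain ⟨hz, hQ⟩ := ne_and_not_mem_of_pairwise_ne h
    exact tendsto_sub_mul_zeta_append_cons_cons_right hz fun e =>
      hQ (List.mem_append_right P (List.mem_of_mem_head? e))
  · exact tendsto_sub_mul_zeta_append_cons hz hP hQ
  · exact continuousAt_const.tendsto_sub_mul_nhdsNE
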